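/- (Proposition 2.1, combination part.) Let (Ω, μ) be a probability space, let X : Ω → 𝒳 be a measurable map into a measurable space 𝒳, and let P₁, P₂ : Ω → ℝ be random variables taking values in (0,1) such that P₁ is measurable with respect to σ(X), P₁ is uniformly distributed on (0,1), and for every u ∈ [0,1] the conditional expectation E[1{P₂ ≤ u} | σ(X)] equals u μ-almost everywhere. Let w₁, w₂ be positive real constants with w₁² + w₂² = 1. Then the combined p-value P = Φ̄(w₁·z(P₁) + w₂·z(P₂)) is uniformly distributed on (0,1). -/

import Mathlib

/-! The hypothesis on `P₂` says that its conditional distribution function given `σ(X)` is the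
constant `u ↦ u`; hence `P₂` is uniform and independent of `σ(X)`, so of `P₁`. By the probability
integral transform `z(P₁)` and `z(P₂)` are independent standard Gaussians, so
`w₁ z(P₁) + w₂ z(P₂)` is standard Gaussian as `w₁² + w₂² = 1`, and `Φ̄` of it is uniform again. -/

open MeasureTheory ProbabilityTheory Set

/-- The cumulative distribution function `Φ` of the standard Gaussian measure on `ℝ`. -/
noncomputable def stdGaussCDF (x : ℝ) : ℝ := ((gaussianReal 0 1) (Set.Iic x)).toReal

/-- The survival function `Φ̄ = 1 - Φ` of the standard Gaussian measure. -/
noncomputable def stdGaussSurv (x : ℝ) : ℝ := 1 - stdGaussCDF x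

/-- `z(u) = Φ̄⁻¹(u)`, the inverse of the standard Gaussian survival function. -/
noncomputable def zval : ℝ → ℝ := Function.invFun stdGaussSurv

/-- The uniform distribution on `(0,1)`: Lebesgue measure restricted to `(0,1)`. -/
noncomputable def unif01 : Measure ℝ := volume.restrict (Set.Ioo (0 : ℝ) 1)


namespace ProbabilityTheory

variable {μ : Measure ℝ} [IsProbabilityMeasure μ]

lemma continuous_cdf [NullSingletonClass μ] : Continuous (cdf μ) := by
  refine continuous_iff_continuousAt.2 fun x => ?_
  rw [(cdf μ).mono.continuousAt_iff_leftLim_eq_rightLim, StieltjesFunction.rightLim_eq]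
  have h := (cdf μ).measure_singleton x
  rw [measure_cdf, measure_singleton, eq_comm, ENNReal.ofReal_eq_zero] at h
  linarith [(cdf μ).mono.leftLim_le (le_refl x)]

lemma strictMono_cdf (h : volume ≪ μ) : StrictMono (cdf μ) := by
  intro a b hab
  have hpos : μ (Ioc a b) ≠ 0 := fun h0 => by
    have := h h0
    rw [Real.volume_Ioc, ENNReal.ofReal_eq_zero] at this
    linarith
  rw [← measure_cdf (μ := μ), StieltjesFunction.measure_Ioc, Ne, ENNReal.ofReal_eq_zero] at hpos
  linarith

lemma cdf_mem_Ioo (h : volume ≪ μ) (x : ℝ) : cdf μ x ∈ Ioo 0 1 :=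
  ⟨(cdf_nonneg μ (x - 1)).trans_lt (strictMono_cdf h (by linarith)),
    (strictMono_cdf h (lt_add_one x)).trans_le (cdf_le_one μ _)⟩

lemma Ioo_subset_range_cdf [NullSingletonClass μ] : Ioo 0 1 ⊆ range (cdf μ) := fun _ hc =>
  mem_range_of_exists_le_of_exists_ge continuous_cdf
    (((tendsto_cdf_atBot μ).eventually (gt_mem_nhds hc.1)).exists.imp fun _ => le_of_lt)
    (((tendsto_cdf_atTop μ).eventually (lt_mem_nhds hc.2)).exists.imp fun _ => le_of_lt)

end ProbabilityTheory

instance : NullSingletonClass (gaussianReal 0 1) := nullSingletonClass_gaussianReal one_ne_zero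

lemma stdGaussCDF_eq_cdf : stdGaussCDF = cdf (gaussianReal 0 1) :=
  funext fun x => (cdf_eq_real _ x).symm

lemma continuous_stdGaussSurv : Continuous stdGaussSurv := by
  change Continuous fun x => 1 - stdGaussCDF x
  rw [stdGaussCDF_eq_cdf]
  exact continuous_const.sub continuous_cdf

lemma strictAnti_stdGaussSurv : StrictAnti stdGaussSurv := fun a b hab => by
  simp only [stdGaussSurv, stdGaussCDF_eq_cdf]
  linarith [strictMono_cdf (gaussianReal_absolutelyContinuous' 0 one_ne_zero) hab]

lemma stdGaussSurv_mem_Ioo (x : ℝ) : stdGaussSurv x ∈ Ioo 0 1 := by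
  obtain ⟨h0, h1⟩ := cdf_mem_Ioo (gaussianReal_absolutelyContinuous' 0 one_ne_zero) x
  rw [stdGaussSurv, stdGaussCDF_eq_cdf]
  exact ⟨by linarith, by linarith⟩

lemma stdGaussSurv_zval {y : ℝ} (hy : y ∈ Ioo 0 1) : stdGaussSurv (zval y) = y := by
  obtain ⟨x, hx⟩ := Ioo_subset_range_cdf (μ := gaussianReal 0 1)
    (show 1 - y ∈ Ioo 0 1 from ⟨by linarith [hy.2], by linarith [hy.1]⟩)
  refine Function.invFun_eq (f := stdGaussSurv) ⟨x, ?_⟩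
  rw [stdGaussSurv, stdGaussCDF_eq_cdf, hx, sub_sub_cancel]

lemma zval_le_iff {y : ℝ} (hy : y ∈ Ioo 0 1) (t : ℝ) : zval y ≤ t ↔ stdGaussSurv t ≤ y := by
  conv_rhs => rw [← stdGaussSurv_zval hy]
  exact strictAnti_stdGaussSurv.le_iff_ge.symm

-- On `(0,1) = range stdGaussSurv` the function `zval` is antitone; off it, `invFun` returns one
-- fixed junk value.
@[fun_prop]
lemma measurable_zval : Measurable zval := by
  refine measurable_of_restrict_of_restrict_compl (measurableSet_Ioo (a := (0 : ℝ)) (b := 1)) ?_ ?_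
  · refine Antitone.measurable fun a b hab => ?_
    simp only [domRestrict_apply]
    rw [zval_le_iff b.2, stdGaussSurv_zval a.2]
    exact hab
  · refine measurable_const' fun x y => ?_
    have hnot : ∀ z : ((Ioo (0 : ℝ) 1)ᶜ : Set ℝ), ¬∃ a, stdGaussSurv a = z :=
      fun z ⟨a, ha⟩ => z.2 (ha ▸ stdGaussSurv_mem_Ioo a)
    simp only [domRestrict_apply, zval, Function.invFun_neg (hnot x), Function.invFun_neg (hnot y)]

instance : IsProbabilityMeasure unif01 := ⟨by simp [unif01]⟩

lemma map_zval_unif01 : unif01.map zval = gaussianReal 0 1 := by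
  have := Measure.isProbabilityMeasure_map (μ := unif01) measurable_zval.aemeasurable
  refine Measure.ext_of_Iic _ _ fun t => ?_
  have hpre : zval ⁻¹' Iic t ∩ Ioo 0 1 = Ico (stdGaussSurv t) 1 := by
    ext y
    simp only [mem_inter_iff, mem_preimage, mem_Iic, mem_Ioo, mem_Ico]
    constructor
    · rintro ⟨h, h0, h1⟩
      exact ⟨(zval_le_iff ⟨h0, h1⟩ t).1 h, h1⟩
    · rintro ⟨h, h1⟩
      have h0 := (stdGaussSurv_mem_Ioo t).1.trans_le h
      exact ⟨(zval_le_iff ⟨h0, h1⟩ t).2 h, h0, h1⟩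
  rw [Measure.map_apply measurable_zval measurableSet_Iic, unif01,
    Measure.restrict_apply (measurable_zval measurableSet_Iic), hpre, Real.volume_Ico,
    ← ofReal_cdf, stdGaussSurv, stdGaussCDF_eq_cdf, sub_sub_cancel]

lemma map_stdGaussSurv_gaussianReal : (gaussianReal 0 1).map stdGaussSurv = unif01 := by
  rw [← map_zval_unif01, Measure.map_map continuous_stdGaussSurv.measurable measurable_zval]
  conv_rhs => rw [← Measure.map_id (μ := unif01)]
  exact Measure.map_congr (ae_restrict_of_forall_mem measurableSet_Ioo fun y => stdGaussSurv_zval)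

lemma le_projIcc_iff {y b : ℝ} (hy : y ∈ Ioc 0 1) :
    y ≤ projIcc 0 1 zero_le_one b ↔ y ≤ b := by
  rw [coe_projIcc, le_max_iff, le_min_iff]
  have := hy.1.not_ge
  have := hy.2
  tauto

lemma unif01_Iic (b : ℝ) : unif01 (Iic b) = ENNReal.ofReal (projIcc 0 1 zero_le_one b) := by
  have hIcc := (projIcc 0 1 zero_le_one b).2
  have hset : Iic b ∩ Ioc 0 1 = Iic (projIcc 0 1 zero_le_one b : ℝ) ∩ Ioc 0 1 := by
    ext y
    simp only [mem_inter_iff, mem_Iic]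
    exact and_congr_left fun hy => (le_projIcc_iff hy).symm
  rw [unif01, Measure.restrict_congr_set Ioo_ae_eq_Ioc, Measure.restrict_apply measurableSet_Iic,
    hset, Iic_inter_Ioc_of_le hIcc.2, Real.volume_Ioc, sub_zero]

section Independence

variable {Ω : Type*} {m mΩ : MeasurableSpace Ω} {μ : Measure Ω} [IsProbabilityMeasure μ]

lemma measureReal_eq_of_condExp_indicator_ae_eq_const (hm : m ≤ mΩ) {t : Set Ω}
    (ht : MeasurableSet t) {c : ℝ}
    (h : μ[t.indicator (fun _ => (1 : ℝ)) | m] =ᵐ[μ] fun _ => c) : μ.real t = c := by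
  calc μ.real t = ∫ ω, t.indicator (fun _ => (1 : ℝ)) ω ∂μ := by simp [integral_indicator ht]
    _ = ∫ ω, (μ[t.indicator (fun _ => (1 : ℝ)) | m]) ω ∂μ := (integral_condExp hm).symm
    _ = c := by simp [integral_congr_ae h]

lemma measure_inter_eq_mul_of_condExp_indicator_ae_eq_const (hm : m ≤ mΩ) {s t : Set Ω}
    (hs : MeasurableSet[m] s) (ht : MeasurableSet t) {c : ℝ}
    (h : μ[t.indicator (fun _ => (1 : ℝ)) | m] =ᵐ[μ] fun _ => c) : μ (s ∩ t) = μ s * μ t := by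
  have hreal : μ.real (s ∩ t) = μ.real s * μ.real t := by
    rw [measureReal_eq_of_condExp_indicator_ae_eq_const hm ht h]
    calc μ.real (s ∩ t) = ∫ ω in s, t.indicator (fun _ => (1 : ℝ)) ω ∂μ := by
          simp [integral_indicator ht, measureReal_restrict_apply ht, inter_comm]
      _ = ∫ ω in s, (μ[t.indicator (fun _ => (1 : ℝ)) | m]) ω ∂μ :=
          (setIntegral_condExp hm ((integrable_const 1).indicator ht) hs).symm
      _ = ∫ _ in s, c ∂μ := integral_congr_ae (ae_restrict_of_ae h)
      _ = μ.real s * c := by simp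
  rw [← ofReal_measureReal, hreal, ENNReal.ofReal_mul measureReal_nonneg, ofReal_measureReal,
    ofReal_measureReal]

lemma indep_comap_of_condExp_indicator_Iic_ae_eq_const (hm : m ≤ mΩ) {Y : Ω → ℝ}
    (hY : Measurable Y)
    (h : ∀ b, ∃ c : ℝ, μ[{ω | Y ω ≤ b}.indicator (fun _ => (1 : ℝ)) | m] =ᵐ[μ] fun _ => c) :
    Indep m (MeasurableSpace.comap Y inferInstance) μ := by
  refine IndepSets.indep hm hY.comap_le (@MeasurableSpace.isPiSystem_measurableSet Ω m)
    (isPiSystem_Iic.comap Y) (@MeasurableSpace.generateFrom_measurableSet Ω m).symm ?_ ?_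
  · conv_lhs => rw [BorelSpace.measurable_eq (α := ℝ), borel_eq_generateFrom_Iic,
      MeasurableSpace.comap_generateFrom]
    rfl
  · refine (IndepSets_iff _ _ _).2 ?_
    rintro s _ hs ⟨_, ⟨b, rfl⟩, rfl⟩
    obtain ⟨c, hc⟩ := h b
    exact measure_inter_eq_mul_of_condExp_indicator_ae_eq_const hm hs (hY measurableSet_Iic) hc

end Independence

lemma map_mul_add_mul_eq_gaussianReal_of_indepFun {Ω : Type*} {mΩ : MeasurableSpace Ω}
    {μ : Measure Ω} {Z₁ Z₂ : Ω → ℝ} (hind : IndepFun Z₁ Z₂ μ) (h₁ : μ.map Z₁ = gaussianReal 0 1)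
    (h₂ : μ.map Z₂ = gaussianReal 0 1) {w₁ w₂ : ℝ} (hw : w₁ ^ 2 + w₂ ^ 2 = 1) :
    μ.map (fun ω => w₁ * Z₁ ω + w₂ * Z₂ ω) = gaussianReal 0 1 := by
  have := gaussianReal_add_gaussianReal_of_indepFun
    (hind.comp (measurable_const_mul w₁) (measurable_const_mul w₂))
    (gaussianReal_const_mul ⟨.of_map_ne_zero (h₁ ▸ IsProbabilityMeasure.ne_zero _), h₁⟩ w₁).map_eq
    (gaussianReal_const_mul ⟨.of_map_ne_zero (h₂ ▸ IsProbabilityMeasure.ne_zero _), h₂⟩ w₂).map_eq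
  have hv : NNReal.mk (w₁ ^ 2) (sq_nonneg _) * 1 + NNReal.mk (w₂ ^ 2) (sq_nonneg _) * 1 = 1 :=
    NNReal.eq (by simpa using hw)
  rwa [mul_zero, mul_zero, add_zero, hv] at this

theorem stmt6_general {Ω 𝒳 : Type*} [MeasurableSpace Ω] [MeasurableSpace 𝒳]
    (μ : Measure Ω) [IsProbabilityMeasure μ]
    (X : Ω → 𝒳) (hX : Measurable X)
    (P₁ P₂ : Ω → ℝ)
    (hP₁m : Measurable[MeasurableSpace.comap X inferInstance] P₁) (hP₂m : Measurable P₂)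
    (hval₂ : ∀ ω, P₂ ω ∈ Set.Ioo (0 : ℝ) 1)
    (hu₁ : μ.map P₁ = unif01)
    (hcond : ∀ u ∈ Set.Icc (0 : ℝ) 1,
      μ[Set.indicator {ω | P₂ ω ≤ u} (fun _ => (1 : ℝ)) |
        MeasurableSpace.comap X inferInstance] =ᵐ[μ] fun _ => u)
    (w₁ w₂ : ℝ) (hw : w₁ ^ 2 + w₂ ^ 2 = 1) :
    μ.map (fun ω => stdGaussSurv (w₁ * zval (P₁ ω) + w₂ * zval (P₂ ω))) = unif01 := by
  have hm : MeasurableSpace.comap X inferInstance ≤ ‹MeasurableSpace Ω› := hX.comap_le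
  have hP₁ : Measurable P₁ := hP₁m.mono hm le_rfl
  have hcond_clamped : ∀ b : ℝ, μ[{ω | P₂ ω ≤ b}.indicator (fun _ => (1 : ℝ)) |
      MeasurableSpace.comap X inferInstance] =ᵐ[μ] fun _ => (projIcc 0 1 zero_le_one b : ℝ) := by
    intro b
    have hset : {ω | P₂ ω ≤ b} = {ω | P₂ ω ≤ projIcc 0 1 zero_le_one b} :=
      ext fun ω => (le_projIcc_iff (Ioo_subset_Ioc_self (hval₂ ω))).symm
    exact hset ▸ hcond _ (projIcc 0 1 zero_le_one b).2
  have hu₂ : μ.map P₂ = unif01 := Measure.ext_of_Iic _ _ fun b => by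
    rw [Measure.map_apply hP₂m measurableSet_Iic, unif01_Iic, ← ofReal_measureReal,
      measureReal_eq_of_condExp_indicator_ae_eq_const hm (hP₂m measurableSet_Iic) (hcond_clamped b)]
  have hindep : IndepFun P₁ P₂ μ := indep_of_indep_of_le_left
    (indep_comap_of_condExp_indicator_Iic_ae_eq_const hm hP₂m fun b => ⟨_, hcond_clamped b⟩)
    hP₁m.comap_le
  have hgauss : ∀ {P : Ω → ℝ}, Measurable P → μ.map P = unif01 →
      μ.map (zval ∘ P) = gaussianReal 0 1 := fun hP hu => by
    rw [← Measure.map_map measurable_zval hP, hu, map_zval_unif01]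
  rw [← map_stdGaussSurv_gaussianReal, ← map_mul_add_mul_eq_gaussianReal_of_indepFun
    (hindep.comp measurable_zval measurable_zval) (hgauss hP₁ hu₁) (hgauss hP₂m hu₂) hw,
    Measure.map_map continuous_stdGaussSurv.measurable (by fun_prop)]
  rfl

theorem stmt6 {Ω 𝒳 : Type*} [MeasurableSpace Ω] [MeasurableSpace 𝒳]
    (μ : Measure Ω) [IsProbabilityMeasure μ]
    (X : Ω → 𝒳) (hX : Measurable X)
    (P₁ P₂ : Ω → ℝ)
    (hP₁m : Measurable[MeasurableSpace.comap X inferInstance] P₁) (hP₂m : Measurable P₂)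
    (hval₁ : ∀ ω, P₁ ω ∈ Set.Ioo (0 : ℝ) 1) (hval₂ : ∀ ω, P₂ ω ∈ Set.Ioo (0 : ℝ) 1)
    (hu₁ : μ.map P₁ = unif01)
    (hcond : ∀ u ∈ Set.Icc (0 : ℝ) 1,
      μ[Set.indicator {ω | P₂ ω ≤ u} (fun _ => (1 : ℝ)) |
        MeasurableSpace.comap X inferInstance] =ᵐ[μ] fun _ => u)
    (w₁ w₂ : ℝ) (hw₁ : 0 < w₁) (hw₂ : 0 < w₂) (hw : w₁ ^ 2 + w₂ ^ 2 = 1) :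
    μ.map (fun ω => stdGaussSurv (w₁ * zval (P₁ ω) + w₂ * zval (P₂ ω))) = unif01 :=
  stmt6_general μ X hX P₁ P₂ hP₁m hP₂m hval₂ hu₁ hcond w₁ w₂ hw
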